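/- arXiv:1706.02854 — 2 statements merged into one kernel-verified Lean document; each statement's English description precedes it below -/
import Mathlib

section
/- Soundness of the labelled tableau calculus: if an ℒ_A□-formula φ is LK(A)-derivable (i.e., there exists a closed LK(A)-tableau for φ), then φ is K(A)-valid. -/
/-- Formulas of the language ℒ_A□ : variables, the constant 0̄, the lattice
connectives ∧ (`and`) and ∨ (`or`), the group connectives & (`conj`) and → (`imp`),
and the modal connective □ (`box`). -/
inductive FormA : Type
  | var  : ℕ → FormA
  | zero : FormA
  | and  : FormA → FormA → FormA
  | or   : FormA → FormA → FormA
  | conj : FormA → FormA → FormA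
  | imp  : FormA → FormA → FormA
  | box  : FormA → FormA

/-- A K(A)-model: a nonempty set of worlds, an accessibility relation, and a
valuation of the variables bounded by some `r ≥ 0`. -/
structure KAModel where
  World : Type
  ne : Nonempty World
  R : World → World → Prop
  V : ℕ → World → ℝ
  r : ℝ
  hr : 0 ≤ r
  hV : ∀ p x, V p x ∈ Set.Icc (-r) r

/-- The valuation extended to all ℒ_A□-formulas.  Note that `sInf ∅ = 0` in `ℝ`,
matching the convention that the infimum of the empty set is `0`. -/
noncomputable def KAModel.val (M : KAModel) : FormA → M.World → ℝ
  | .var p, x => M.V p x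
  | .zero, _ => 0
  | .and φ ψ, x => min (M.val φ x) (M.val ψ x)
  | .or φ ψ, x => max (M.val φ x) (M.val ψ x)
  | .conj φ ψ, x => M.val φ x + M.val ψ x
  | .imp φ ψ, x => M.val ψ x - M.val φ x
  | .box φ, x => sInf {v : ℝ | ∃ y, M.R x y ∧ M.val φ y = v}

/-- Validity of a formula in a model. -/
def KAModel.ValidIn (M : KAModel) (φ : FormA) : Prop := ∀ x : M.World, 0 ≤ M.val φ x

/-- K(A)-validity. -/
def KAValid (φ : FormA) : Prop := ∀ M : KAModel, M.ValidIn φ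

/-- A labelled formula: an ℒ_A□-formula together with a label in ℕ. -/
abbrev LabForm := FormA × ℕ

/-- A labelled inequation `Γ ▷ Δ` between finite multisets of labelled formulas,
where `▷` is `>` if `strict` and `≥` otherwise. -/
structure Ineq where
  strict : Bool
  lhs : Multiset LabForm
  rhs : Multiset LabForm

/-- Tableau nodes: labelled inequations, and relations `r i j`. -/
inductive TNode
  | ineq : Ineq → TNode
  | rel : ℕ → ℕ → TNode

/-- A branch: a finite list of tableau nodes. -/
abbrev Branch := List TNode

/-- The formulas treated as variables of the associated linear system:
labelled variables and labelled boxed formulas. -/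
def FormA.IsAtomic : FormA → Prop
  | .var _ => True
  | .box _ => True
  | _ => False

/-- An inequation all of whose formulas are labelled variables or labelled boxed
formulas, i.e. one belonging to the associated system of a branch. -/
def Ineq.Pure (I : Ineq) : Prop := ∀ f ∈ I.lhs + I.rhs, FormA.IsAtomic (Prod.fst f)

/-- Sum of the values of a multiset of labelled formulas under an assignment. -/
noncomputable def msum (e : LabForm → ℝ) (Γ : Multiset LabForm) : ℝ := (Γ.map e).sum

/-- An assignment satisfies a labelled inequation (read as an inequation between
formal sums, the empty multiset being 0). -/
def Ineq.Holds (e : LabForm → ℝ) (I : Ineq) : Prop :=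
  if I.strict then msum e I.rhs < msum e I.lhs else msum e I.rhs ≤ msum e I.lhs

/-- A branch is closed if its associated system of inequations is inconsistent
over ℝ. -/
def Branch.IsClosed (B : Branch) : Prop :=
  ¬ ∃ e : LabForm → ℝ, ∀ I : Ineq, TNode.ineq I ∈ B → I.Pure → I.Holds e

/-- The labels occurring in a tableau node. -/
def TNode.labels : TNode → Multiset ℕ
  | .ineq I => I.lhs.map Prod.snd + I.rhs.map Prod.snd
  | .rel i j => {i, j}

/-- A label is fresh for a branch if it occurs nowhere on it. -/
def Fresh (j : ℕ) (B : Branch) : Prop := ∀ t ∈ B, j ∉ t.labels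

/-- `Closable B` holds iff the branch `B` can be extended, using the rules of the
labelled tableau calculus LK(A), to a finite subtree all of whose branches are
closed.  Thus a closed LK(A)-tableau for φ exists iff the initial branch for φ is
closable. -/
inductive Closable : Branch → Prop
  | closed {B : Branch} : B.IsClosed → Closable B
  | zeroL {B : Branch} {s : Bool} {Γ Δ : Multiset LabForm} {i : ℕ} :
      TNode.ineq ⟨s, Γ + {(.zero, i)}, Δ⟩ ∈ B →
      Closable (TNode.ineq ⟨s, Γ, Δ⟩ :: B) → Closable B
  | zeroR {B : Branch} {s : Bool} {Γ Δ : Multiset LabForm} {i : ℕ} :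
      TNode.ineq ⟨s, Γ, {(FormA.zero, i)} + Δ⟩ ∈ B →
      Closable (TNode.ineq ⟨s, Γ, Δ⟩ :: B) → Closable B
  | conjL {B : Branch} {s : Bool} {Γ Δ : Multiset LabForm} {i : ℕ} {φ ψ : FormA} :
      TNode.ineq ⟨s, Γ + {(.conj φ ψ, i)}, Δ⟩ ∈ B →
      Closable (TNode.ineq ⟨s, Γ + {(φ, i), (ψ, i)}, Δ⟩ :: B) → Closable B
  | conjR {B : Branch} {s : Bool} {Γ Δ : Multiset LabForm} {i : ℕ} {φ ψ : FormA} :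
      TNode.ineq ⟨s, Γ, {(FormA.conj φ ψ, i)} + Δ⟩ ∈ B →
      Closable (TNode.ineq ⟨s, Γ, {(φ, i), (ψ, i)} + Δ⟩ :: B) → Closable B
  | impL {B : Branch} {s : Bool} {Γ Δ : Multiset LabForm} {i : ℕ} {φ ψ : FormA} :
      TNode.ineq ⟨s, Γ + {(.imp φ ψ, i)}, Δ⟩ ∈ B →
      Closable (TNode.ineq ⟨s, Γ + {(ψ, i)}, {(φ, i)} + Δ⟩ :: B) → Closable B
  | impR {B : Branch} {s : Bool} {Γ Δ : Multiset LabForm} {i : ℕ} {φ ψ : FormA} :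
      TNode.ineq ⟨s, Γ, {(FormA.imp φ ψ, i)} + Δ⟩ ∈ B →
      Closable (TNode.ineq ⟨s, Γ + {(φ, i)}, {(ψ, i)} + Δ⟩ :: B) → Closable B
  | andL {B : Branch} {s : Bool} {Γ Δ : Multiset LabForm} {i : ℕ} {φ ψ : FormA} :
      TNode.ineq ⟨s, Γ + {(.and φ ψ, i)}, Δ⟩ ∈ B →
      Closable (TNode.ineq ⟨s, Γ + {(φ, i)}, Δ⟩ ::
                TNode.ineq ⟨s, Γ + {(ψ, i)}, Δ⟩ :: B) → Closable B
  | orR {B : Branch} {s : Bool} {Γ Δ : Multiset LabForm} {i : ℕ} {φ ψ : FormA} :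
      TNode.ineq ⟨s, Γ, {(FormA.or φ ψ, i)} + Δ⟩ ∈ B →
      Closable (TNode.ineq ⟨s, Γ, {(φ, i)} + Δ⟩ ::
                TNode.ineq ⟨s, Γ, {(ψ, i)} + Δ⟩ :: B) → Closable B
  | orL {B : Branch} {s : Bool} {Γ Δ : Multiset LabForm} {i : ℕ} {φ ψ : FormA} :
      TNode.ineq ⟨s, Γ + {(.or φ ψ, i)}, Δ⟩ ∈ B →
      Closable (TNode.ineq ⟨s, Γ + {(φ, i)}, Δ⟩ :: B) →
      Closable (TNode.ineq ⟨s, Γ + {(ψ, i)}, Δ⟩ :: B) → Closable B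
  | andR {B : Branch} {s : Bool} {Γ Δ : Multiset LabForm} {i : ℕ} {φ ψ : FormA} :
      TNode.ineq ⟨s, Γ, {(FormA.and φ ψ, i)} + Δ⟩ ∈ B →
      Closable (TNode.ineq ⟨s, Γ, {(φ, i)} + Δ⟩ :: B) →
      Closable (TNode.ineq ⟨s, Γ, {(ψ, i)} + Δ⟩ :: B) → Closable B
  | boxL {B : Branch} {s : Bool} {Γ Δ : Multiset LabForm} {i j : ℕ} {φ : FormA} :
      TNode.rel i j ∈ B →
      TNode.ineq ⟨s, Γ + {(.box φ, i)}, Δ⟩ ∈ B →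
      Closable (TNode.ineq ⟨false, {(φ, j)}, {(FormA.box φ, i)}⟩ :: B) → Closable B
  | boxR {B : Branch} {s : Bool} {Γ Δ : Multiset LabForm} {i : ℕ} {φ : FormA} (j : ℕ) :
      TNode.ineq ⟨s, Γ, {(FormA.box φ, i)} + Δ⟩ ∈ B →
      Fresh j B →
      Closable (TNode.ineq ⟨false, {(FormA.box φ, i)}, {(φ, j)}⟩ ::
                TNode.rel i j :: B) → Closable B
  | ex {B : Branch} {i k : ℕ} (j : ℕ) :
      TNode.rel i k ∈ B →
      Fresh j B →
      Closable (TNode.rel k j :: B) → Closable B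

/-- φ is LK(A)-derivable: there is a closed LK(A)-tableau with root node
`[] > [φ^1]` and covering node `r 1 2`. -/
def LKDerivable (φ : FormA) : Prop :=
  Closable [TNode.ineq ⟨true, 0, {(φ, 1)}⟩, TNode.rel 1 2]

/-!
Soundness is proved by showing that no closable branch is *approximately satisfiable*: there
is a serial model in which, for every `ε > 0`, the labels can be sent to worlds so that all
relation nodes hold, strict inequations hold with a fixed margin `δ > 0` and non-strict ones
up to `ε`. Every rule preserves this property on at least one of its branches; the slack `ε`
is needed for `(⇒□)`, since the infimum defining `□φ` need not be attained. At a closed branch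
we pass to the limit `ε → 0`: all the values lie in a compact box, and a cluster point of the
corresponding assignments solves the system of the branch, contradicting closedness.
A countermodel to `φ`, made serial by adding a zero-valued world, makes the root branch
approximately satisfiable.
-/

theorem IsCompact.exists_forall_mem_of_eventually_mem {ι X : Type*} [TopologicalSpace X]
    {K : Set X} (hK : IsCompact K) {l : Filter ι} [l.NeBot] {g : ι → X} (hg : ∀ i, g i ∈ K) :
    ∃ x, ∀ s, IsClosed s → (∀ᶠ i in l, g i ∈ s) → x ∈ s := by
  obtain ⟨x, -, hx⟩ := hK.exists_clusterPt (f := l.map g)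
    (Filter.le_principal_iff.mpr (Filter.Eventually.of_forall (p := (g · ∈ K)) hg))
  exact ⟨x, fun s hs hev => hs.closure_eq ▸ hx.mem_closure_of_mem s hev⟩

theorem Real.abs_sInf_le {S : Set ℝ} {b : ℝ} (hb : 0 ≤ b) (h : ∀ v ∈ S, |v| ≤ b) :
    |sInf S| ≤ b := by
  rcases S.eq_empty_or_nonempty with rfl | ⟨v, hv⟩
  · simpa using hb
  refine abs_le.mpr ⟨le_csInf ⟨v, hv⟩ fun u hu => (abs_le.mp (h u hu)).1, ?_⟩
  exact (csInf_le ⟨-b, fun u hu => (abs_le.mp (h u hu)).1⟩ hv).trans (abs_le.mp (h v hv)).2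

theorem msum_add (e : LabForm → ℝ) (Γ Δ : Multiset LabForm) :
    msum e (Γ + Δ) = msum e Γ + msum e Δ := by
  simp [msum]

@[simp]
theorem msum_singleton (e : LabForm → ℝ) (f : LabForm) : msum e {f} = e f := by
  simp [msum]

@[simp]
theorem msum_pair (e : LabForm → ℝ) (f g : LabForm) : msum e {f, g} = e f + e g := by
  simp [msum]

theorem continuous_msum (Γ : Multiset LabForm) : Continuous fun e : LabForm → ℝ => msum e Γ :=
  continuous_multiset_sum Γ fun f _ => continuous_apply f

noncomputable def FormA.valBound (r : ℝ) : FormA → ℝ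
  | .var _ => r
  | .zero => 0
  | .and φ ψ => max (φ.valBound r) (ψ.valBound r)
  | .or φ ψ => max (φ.valBound r) (ψ.valBound r)
  | .conj φ ψ => φ.valBound r + ψ.valBound r
  | .imp φ ψ => φ.valBound r + ψ.valBound r
  | .box φ => φ.valBound r

namespace KAModel

variable (M : KAModel)

theorem val_box (φ : FormA) (x : M.World) : M.val (.box φ) x = sInf (M.val φ '' {y | M.R x y}) :=
  rfl

theorem abs_val_le (ψ : FormA) (x : M.World) : |M.val ψ x| ≤ ψ.valBound M.r := by
  induction ψ generalizing x with
  | var p => exact abs_le.mpr (M.hV p x)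
  | zero => simp [val, FormA.valBound]
  | and φ ψ ihφ ihψ => exact abs_min_le_max_abs_abs.trans (max_le_max (ihφ x) (ihψ x))
  | or φ ψ ihφ ihψ => exact abs_max_le_max_abs_abs.trans (max_le_max (ihφ x) (ihψ x))
  | conj φ ψ ihφ ihψ => exact (abs_add_le _ _).trans (add_le_add (ihφ x) (ihψ x))
  | imp φ ψ ihφ ihψ =>
    exact (abs_sub_comm _ _).trans_le ((abs_sub _ _).trans (add_le_add (ihφ x) (ihψ x)))
  | box φ ih =>
    have hφ : 0 ≤ φ.valBound M.r := M.ne.elim fun y => (abs_nonneg _).trans (ih y)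
    rw [val_box]
    exact Real.abs_sInf_le hφ (by rintro _ ⟨y, -, rfl⟩; exact ih y)

theorem bddBelow_range_val (φ : FormA) : BddBelow (Set.range (M.val φ)) :=
  ⟨-φ.valBound M.r, by rintro _ ⟨x, rfl⟩; exact (abs_le.mp (M.abs_val_le φ x)).1⟩

theorem val_box_le {x y : M.World} (h : M.R x y) (φ : FormA) : M.val (.box φ) x ≤ M.val φ y := by
  rw [val_box]
  exact csInf_le ((M.bddBelow_range_val φ).mono (Set.image_subset_range _ _)) ⟨y, h, rfl⟩

def IsSerial : Prop := ∀ x : M.World, ∃ y, M.R x y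

variable {M}

theorem IsSerial.exists_val_lt_val_box_add (hM : M.IsSerial) (x : M.World) (φ : FormA) {ε : ℝ}
    (hε : 0 < ε) : ∃ y, M.R x y ∧ M.val φ y < M.val (.box φ) x + ε := by
  obtain ⟨y, hy⟩ := hM x
  obtain ⟨_, ⟨z, hz, rfl⟩, hlt⟩ := Real.lt_sInf_add_pos
    (s := M.val φ '' {y | M.R x y}) ⟨_, y, hy, rfl⟩ hε
  exact ⟨z, hz, hlt⟩

variable (M)

/-- A world without successors gets the new world `none` as its only successor. Every formula
has value `0` at `none`, as it has at a world without successors (`sInf ∅ = 0`), so the values at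
the old worlds do not change. -/
def serialR : Option M.World → Option M.World → Prop
  | some x, some y => M.R x y
  | some x, none => ∀ y, ¬ M.R x y
  | none, none => True
  | none, some _ => False

@[reducible] noncomputable def serialize : KAModel where
  World := Option M.World
  ne := ⟨none⟩
  R := M.serialR
  V p o := o.elim 0 (M.V p)
  r := M.r
  hr := M.hr
  hV := by
    rintro p (_ | x)
    · exact ⟨neg_nonpos.mpr M.hr, M.hr⟩
    · exact M.hV p x

theorem serialize_isSerial : M.serialize.IsSerial := by
  rintro (_ | x)
  · exact ⟨none, trivial⟩
  · by_cases h : ∃ y, M.R x y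
    · obtain ⟨y, hy⟩ := h
      exact ⟨some y, hy⟩
    · exact ⟨none, not_exists.mp h⟩

theorem val_serialize_none (ψ : FormA) : M.serialize.val ψ none = 0 := by
  induction ψ with
  | var p => rfl
  | zero => rfl
  | and φ ψ ihφ ihψ | or φ ψ ihφ ihψ | conj φ ψ ihφ ihψ | imp φ ψ ihφ ihψ =>
    simp [val, ihφ, ihψ]
  | box φ ih =>
    have hsucc : {y | M.serialize.R none y} = {none} := by
      ext (_ | y) <;> simp [serialize, serialR]
    rw [val_box M.serialize φ none, hsucc, Set.image_singleton, ih, csInf_singleton]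

theorem val_serialize_some (ψ : FormA) (x : M.World) :
    M.serialize.val ψ (some x) = M.val ψ x := by
  induction ψ generalizing x with
  | var p => rfl
  | zero => rfl
  | and φ ψ ihφ ihψ | or φ ψ ihφ ihψ | conj φ ψ ihφ ihψ | imp φ ψ ihφ ihψ =>
    simp [val, ihφ, ihψ]
  | box φ ih =>
    rw [val_box M.serialize φ (some x), val_box]
    by_cases h : ∃ y, M.R x y
    · have hsucc : {y | M.serialize.R (some x) y} = some '' {y | M.R x y} := by
        ext (_ | y)
        · simpa [serialize, serialR] using h
        · simp [serialize, serialR]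
      rw [hsucc, Set.image_image]
      simp only [ih]
    · have hsucc : {y | M.serialize.R (some x) y} = {none} := by
        ext (_ | y)
        · simpa [serialize, serialR] using h
        · simpa [serialize, serialR] using fun hy => h ⟨y, hy⟩
      have hempty : {y | M.R x y} = ∅ := Set.eq_empty_of_forall_notMem fun y hy => h ⟨y, hy⟩
      rw [hsucc, hempty, Set.image_singleton, val_serialize_none, Set.image_empty, csInf_singleton,
        Real.sInf_empty]

end KAModel

noncomputable def labelVal (M : KAModel) (w : ℕ → M.World) (f : LabForm) : ℝ :=
  M.val f.1 (w f.2)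

noncomputable def Ineq.margin (e : LabForm → ℝ) (I : Ineq) : ℝ := msum e I.lhs - msum e I.rhs

def Ineq.requiredMargin (δ ε : ℝ) (I : Ineq) : ℝ := if I.strict then δ else -ε

theorem Ineq.requiredMargin_mono (I : Ineq) (δ : ℝ) {ε ε' : ℝ} (h : ε ≤ ε') :
    I.requiredMargin δ ε' ≤ I.requiredMargin δ ε := by
  unfold requiredMargin
  split <;> linarith

theorem Ineq.margin_update_of_notMem {M : KAModel} {w : ℕ → M.World} {j : ℕ} {y : M.World}
    {I : Ineq} (hj : j ∉ (TNode.ineq I).labels) :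
    I.margin (labelVal M (Function.update w j y)) = I.margin (labelVal M w) := by
  have hlabel : ∀ f ∈ I.lhs + I.rhs, f.2 ≠ j := by
    rintro f hf rfl
    simp only [TNode.labels, ← Multiset.map_add] at hj
    exact hj (Multiset.mem_map_of_mem _ hf)
  have hval : ∀ f ∈ I.lhs + I.rhs, labelVal M (Function.update w j y) f = labelVal M w f :=
    fun f hf => by simp [labelVal, Function.update_of_ne (hlabel f hf)]
  simp only [margin, msum, Multiset.map_congr rfl fun f hf => hval f (Multiset.mem_add.2 (.inl hf)),
    Multiset.map_congr rfl fun f hf => hval f (Multiset.mem_add.2 (.inr hf))]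

theorem Fresh.ne_of_rel_mem {j k l : ℕ} {B : Branch} (hj : Fresh j B) (h : TNode.rel k l ∈ B) :
    k ≠ j ∧ l ≠ j := by
  have := hj _ h
  simp only [TNode.labels, Multiset.insert_eq_cons, Multiset.mem_cons, Multiset.mem_singleton,
    not_or] at this
  exact ⟨Ne.symm this.1, Ne.symm this.2⟩

structure Realizes (M : KAModel) (δ ε : ℝ) (w : ℕ → M.World) (B : Branch) : Prop where
  rel : ∀ i j, TNode.rel i j ∈ B → M.R (w i) (w j)
  ineq : ∀ I : Ineq, TNode.ineq I ∈ B → I.requiredMargin δ ε ≤ I.margin (labelVal M w)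

namespace Realizes

variable {M : KAModel} {δ ε : ℝ} {w : ℕ → M.World} {B : Branch}

theorem nil : Realizes M δ ε w [] := ⟨by simp, by simp⟩

theorem mono {ε' : ℝ} (hw : Realizes M δ ε w B) (h : ε ≤ ε') : Realizes M δ ε' w B :=
  ⟨hw.rel, fun I hI => (I.requiredMargin_mono δ h).trans (hw.ineq I hI)⟩

theorem cons_ineq (hw : Realizes M δ ε w B) {I : Ineq}
    (hI : I.requiredMargin δ ε ≤ I.margin (labelVal M w)) : Realizes M δ ε w (.ineq I :: B) := by
  refine ⟨fun i j h => hw.rel i j ?_, fun I' h => ?_⟩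
  · simpa using h
  · rcases List.mem_cons.1 h with h | h
    · cases h
      exact hI
    · exact hw.ineq I' h

theorem cons_rel (hw : Realizes M δ ε w B) {i j : ℕ} (hij : M.R (w i) (w j)) :
    Realizes M δ ε w (.rel i j :: B) := by
  refine ⟨fun k l h => ?_, fun I h => hw.ineq I (by simpa using h)⟩
  rcases List.mem_cons.1 h with h | h
  · cases h
    exact hij
  · exact hw.rel k l h

theorem update_of_fresh (hw : Realizes M δ ε w B) {j : ℕ} (hj : Fresh j B) (y : M.World) :
    Realizes M δ ε (Function.update w j y) B := by
  refine ⟨fun k l h => ?_, fun I h => ?_⟩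
  · obtain ⟨hk, hl⟩ := hj.ne_of_rel_mem h
    simpa [Function.update_of_ne hk, Function.update_of_ne hl] using hw.rel k l h
  · rw [Ineq.margin_update_of_notMem (hj _ h)]
    exact hw.ineq I h

end Realizes

def Branch.ApproxSatisfiable (B : Branch) : Prop :=
  ∃ M : KAModel, M.IsSerial ∧ ∃ δ > 0, ∀ ε > 0, ∃ w, Realizes M δ ε w B

namespace Branch.ApproxSatisfiable

variable {B : Branch}

theorem cons_ineq (hB : B.ApproxSatisfiable) {s : Bool} {Γ Δ Γ' Δ' : Multiset LabForm}
    (hJ : .ineq ⟨s, Γ, Δ⟩ ∈ B)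
    (h : ∀ (M : KAModel) w, Ineq.margin (labelVal M w) ⟨s, Γ, Δ⟩ ≤
      Ineq.margin (labelVal M w) ⟨s, Γ', Δ'⟩) :
    ApproxSatisfiable (.ineq ⟨s, Γ', Δ'⟩ :: B) := by
  obtain ⟨M, hM, δ, hδ, H⟩ := hB
  refine ⟨M, hM, δ, hδ, fun ε hε => ?_⟩
  obtain ⟨w, hw⟩ := H ε hε
  exact ⟨w, hw.cons_ineq ((hw.ineq _ hJ).trans (h M w))⟩

theorem cons_ineq_or (hB : B.ApproxSatisfiable) {s : Bool} {Γ Δ Γ₁ Δ₁ Γ₂ Δ₂ : Multiset LabForm}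
    (hJ : .ineq ⟨s, Γ, Δ⟩ ∈ B)
    (h : ∀ (M : KAModel) w, Ineq.margin (labelVal M w) ⟨s, Γ, Δ⟩ ≤
      max (Ineq.margin (labelVal M w) ⟨s, Γ₁, Δ₁⟩) (Ineq.margin (labelVal M w) ⟨s, Γ₂, Δ₂⟩)) :
    ApproxSatisfiable (.ineq ⟨s, Γ₁, Δ₁⟩ :: B) ∨ ApproxSatisfiable (.ineq ⟨s, Γ₂, Δ₂⟩ :: B) := by
  obtain ⟨M, hM, δ, hδ, H⟩ := hB
  have hsome : ∀ ε > 0, (∃ w, Realizes M δ ε w (.ineq ⟨s, Γ₁, Δ₁⟩ :: B)) ∨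
      ∃ w, Realizes M δ ε w (.ineq ⟨s, Γ₂, Δ₂⟩ :: B) := by
    intro ε hε
    obtain ⟨w, hw⟩ := H ε hε
    rcases le_max_iff.mp ((hw.ineq _ hJ).trans (h M w)) with h₁ | h₂
    · exact .inl ⟨w, hw.cons_ineq h₁⟩
    · exact .inr ⟨w, hw.cons_ineq h₂⟩
  -- if the first branch fails at some `ε₁`, the second one works at every `ε ≤ ε₁`
  by_cases hall : ∀ ε > 0, ∃ w, Realizes M δ ε w (.ineq ⟨s, Γ₁, Δ₁⟩ :: B)
  · exact .inl ⟨M, hM, δ, hδ, hall⟩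
  push Not at hall
  obtain ⟨ε₁, hε₁, hfail⟩ := hall
  refine .inr ⟨M, hM, δ, hδ, fun ε hε => ?_⟩
  rcases hsome (min ε ε₁) (lt_min hε hε₁) with ⟨w, hw⟩ | ⟨w, hw⟩
  · exact (hfail w (hw.mono (min_le_right ε ε₁))).elim
  · exact ⟨w, hw.mono (min_le_left ε ε₁)⟩

theorem cons_boxL (hB : B.ApproxSatisfiable) {i j : ℕ} (hij : .rel i j ∈ B) (φ : FormA) :
    ApproxSatisfiable (.ineq ⟨false, {(φ, j)}, {(.box φ, i)}⟩ :: B) := by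
  obtain ⟨M, hM, δ, hδ, H⟩ := hB
  refine ⟨M, hM, δ, hδ, fun ε hε => ?_⟩
  obtain ⟨w, hw⟩ := H ε hε
  refine ⟨w, hw.cons_ineq ?_⟩
  have := M.val_box_le (hw.rel i j hij) φ
  simp only [Ineq.requiredMargin, Ineq.margin, msum_singleton, labelVal, Bool.false_eq_true,
    ↓reduceIte]
  linarith

theorem cons_boxR (hB : B.ApproxSatisfiable) {s : Bool} {Γ Δ : Multiset LabForm} {i j : ℕ}
    {φ : FormA} (hJ : .ineq ⟨s, Γ, {(.box φ, i)} + Δ⟩ ∈ B) (hj : Fresh j B) :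
    ApproxSatisfiable (.ineq ⟨false, {(.box φ, i)}, {(φ, j)}⟩ :: .rel i j :: B) := by
  obtain ⟨M, hM, δ, hδ, H⟩ := hB
  have hij : i ≠ j := by
    rintro rfl
    exact hj _ hJ (by simp [TNode.labels])
  refine ⟨M, hM, δ, hδ, fun ε hε => ?_⟩
  obtain ⟨w, hw⟩ := H ε hε
  obtain ⟨y, hy, hyε⟩ := hM.exists_val_lt_val_box_add (w i) φ hε
  refine ⟨Function.update w j y, ((hw.update_of_fresh hj y).cons_rel ?_).cons_ineq ?_⟩
  · simpa [Function.update_of_ne hij] using hy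
  · simp only [Ineq.requiredMargin, Ineq.margin, msum_singleton, labelVal, Bool.false_eq_true,
      ↓reduceIte, Function.update_self, Function.update_of_ne hij]
    linarith

theorem cons_ex (hB : B.ApproxSatisfiable) {i k j : ℕ} (hik : .rel i k ∈ B) (hj : Fresh j B) :
    ApproxSatisfiable (.rel k j :: B) := by
  obtain ⟨M, hM, δ, hδ, H⟩ := hB
  have hkj : k ≠ j := (hj.ne_of_rel_mem hik).2
  refine ⟨M, hM, δ, hδ, fun ε hε => ?_⟩
  obtain ⟨w, hw⟩ := H ε hε
  obtain ⟨y, hy⟩ := hM (w k)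
  refine ⟨Function.update w j y, (hw.update_of_fresh hj y).cons_rel ?_⟩
  simpa [Function.update_of_ne hkj] using hy

theorem not_isClosed (hB : B.ApproxSatisfiable) : ¬ B.IsClosed := by
  obtain ⟨M, -, δ, hδ, H⟩ := hB
  choose w hw using fun n : ℕ => H (1 / (n + 1)) Nat.one_div_pos_of_nat
  have hbox : ∀ n, labelVal M (w n) ∈
      Set.univ.pi fun f : LabForm => Set.Icc (-f.1.valBound M.r) (f.1.valBound M.r) :=
    fun n f _ => abs_le.mp (M.abs_val_le f.1 _)
  obtain ⟨e, he⟩ := (isCompact_univ_pi fun _ => isCompact_Icc).exists_forall_mem_of_eventually_mem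
    (l := Filter.atTop) hbox
  refine fun hclosed => hclosed ⟨e, fun I hI _ => ?_⟩
  have hlim : ∀ c, (∀ᶠ n in Filter.atTop, c ≤ I.margin (labelVal M (w n))) → c ≤ I.margin e :=
    fun c => he {e' | c ≤ I.margin e'}
      (isClosed_le continuous_const ((continuous_msum _).sub (continuous_msum _)))
  rw [Ineq.Holds, ← sub_pos, ← sub_nonneg]
  split_ifs with hs
  · refine hδ.trans_le (hlim δ (Filter.Eventually.of_forall fun n => ?_))
    simpa only [Ineq.requiredMargin, if_pos hs] using (hw n).ineq I hI
  · refine le_of_forall_pos_le_add fun m hm => neg_le_iff_add_nonneg.mp (hlim (-m) ?_)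
    filter_upwards [tendsto_one_div_add_atTop_nhds_zero_nat.eventually (gt_mem_nhds hm)]
      with n hn
    have := (hw n).ineq I hI
    rw [Ineq.requiredMargin, if_neg hs] at this
    linarith

end Branch.ApproxSatisfiable

theorem Closable.not_approxSatisfiable {B : Branch} (h : Closable B) : ¬ B.ApproxSatisfiable := by
  induction h with
  | closed h => exact fun hB => hB.not_isClosed h
  | zeroL hJ _ ih | zeroR hJ _ ih | conjL hJ _ ih | conjR hJ _ ih | impL hJ _ ih | impR hJ _ ih =>
    refine fun hB => ih (hB.cons_ineq hJ fun M w => ?_)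
    simp only [Ineq.margin, msum_add, msum_singleton, msum_pair, labelVal, KAModel.val]
    linarith
  | @andL _ _ _ _ i φ ψ hJ _ ih =>
    refine fun hB => ih ((hB.cons_ineq hJ fun M w => ?_).cons_ineq
      (List.mem_cons_of_mem _ hJ) fun M w => ?_) <;>
    simp only [Ineq.margin, msum_add, msum_singleton, labelVal, KAModel.val]
    · linarith [min_le_right (M.val φ (w i)) (M.val ψ (w i))]
    · linarith [min_le_left (M.val φ (w i)) (M.val ψ (w i))]
  | @orR _ _ _ _ i φ ψ hJ _ ih =>
    refine fun hB => ih ((hB.cons_ineq hJ fun M w => ?_).cons_ineq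
      (List.mem_cons_of_mem _ hJ) fun M w => ?_) <;>
    simp only [Ineq.margin, msum_add, msum_singleton, labelVal, KAModel.val]
    · linarith [le_max_right (M.val φ (w i)) (M.val ψ (w i))]
    · linarith [le_max_left (M.val φ (w i)) (M.val ψ (w i))]
  | orL hJ _ _ ih₁ ih₂ =>
    refine fun hB => (hB.cons_ineq_or hJ fun M w => le_of_eq ?_).elim ih₁ ih₂
    simp only [Ineq.margin, msum_add, msum_singleton, labelVal, KAModel.val]
    rw [max_sub_sub_right, max_add_add_left]
  | andR hJ _ _ ih₁ ih₂ =>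
    refine fun hB => (hB.cons_ineq_or hJ fun M w => le_of_eq ?_).elim ih₁ ih₂
    simp only [Ineq.margin, msum_add, msum_singleton, labelVal, KAModel.val]
    rw [max_sub_sub_left, min_add_add_right]
  | boxL hij _ _ ih => exact fun hB => ih (hB.cons_boxL hij _)
  | boxR _ hJ hj _ ih => exact fun hB => ih (hB.cons_boxR hJ hj)
  | ex _ hik hj _ ih => exact fun hB => ih (hB.cons_ex hik hj)

theorem approxSatisfiable_root_of_val_neg {M : KAModel} {φ : FormA} {x : M.World}
    (hx : M.val φ x < 0) : Branch.ApproxSatisfiable [.ineq ⟨true, 0, {(φ, 1)}⟩, .rel 1 2] := by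
  obtain ⟨y, hy⟩ := M.serialize_isSerial (some x)
  refine ⟨M.serialize, M.serialize_isSerial, -M.val φ x, neg_pos.mpr hx, fun ε _ =>
    ⟨fun n => if n = 1 then some x else y, (Realizes.nil.cons_rel ?_).cons_ineq ?_⟩⟩
  · simpa using hy
  · simp [Ineq.requiredMargin, Ineq.margin, msum, labelVal, KAModel.val_serialize_some]

/-- Soundness of the labelled tableau calculus: if an ℒ_A□-formula φ
is LK(A)-derivable, then φ is K(A)-valid. -/
theorem stmt_2 (φ : FormA) : LKDerivable φ → KAValid φ := by
  intro hφ M x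
  by_contra! hx
  exact Closable.not_approxSatisfiable hφ (approxSatisfiable_root_of_val_neg hx)
end

section
/- The seriality axiom □p → ◇p, i.e., the ℒ_A□-formula □p → ((□(p → 0̄)) → 0̄), is K(A)-valid, where p is a propositional variable. -/
namespace KAModel

variable (M : KAModel)

/- Boundedness is what makes `sInf` in the clause for `□` a genuine infimum: `sInf` of a set of
reals that is not bounded below is the junk value `0`. -/
theorem exists_abs_val_le (φ : FormA) : ∃ c, ∀ x, |M.val φ x| ≤ c := by
  induction φ with
  | var p => exact ⟨M.r, fun x => abs_le.2 (M.hV p x)⟩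
  | zero => exact ⟨0, fun x => by simp [val]⟩
  | and φ ψ ihφ ihψ =>
    obtain ⟨c, hc⟩ := ihφ; obtain ⟨d, hd⟩ := ihψ
    exact ⟨max c d, fun x => abs_min_le_max_abs_abs.trans (max_le_max (hc x) (hd x))⟩
  | or φ ψ ihφ ihψ =>
    obtain ⟨c, hc⟩ := ihφ; obtain ⟨d, hd⟩ := ihψ
    exact ⟨max c d, fun x => abs_max_le_max_abs_abs.trans (max_le_max (hc x) (hd x))⟩
  | conj φ ψ ihφ ihψ =>
    obtain ⟨c, hc⟩ := ihφ; obtain ⟨d, hd⟩ := ihψ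
    exact ⟨c + d, fun x => (abs_add_le _ _).trans (add_le_add (hc x) (hd x))⟩
  | imp φ ψ ihφ ihψ =>
    obtain ⟨c, hc⟩ := ihφ; obtain ⟨d, hd⟩ := ihψ
    exact ⟨d + c, fun x => (abs_sub _ _).trans (add_le_add (hd x) (hc x))⟩
  | box φ ih =>
    obtain ⟨c, hc⟩ := ih
    obtain ⟨x₀⟩ := M.ne
    have hc₀ : 0 ≤ c := (abs_nonneg _).trans (hc x₀)
    refine ⟨c, fun x => ?_⟩
    set S := {v : ℝ | ∃ y, M.R x y ∧ M.val φ y = v}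
    have hS : S ⊆ Set.Icc (-c) c := by
      rintro _ ⟨y, -, rfl⟩
      exact abs_le.1 (hc y)
    rcases S.eq_empty_or_nonempty with hempty | hne
    · simp [val, S, hempty, hc₀]
    · exact abs_le.2 ⟨le_csInf hne fun v hv => (hS hv).1,
        (csInf_le ⟨-c, fun v hv => (hS hv).1⟩ hne.some_mem).trans (hS hne.some_mem).2⟩

variable {M}

theorem val_box_le_of_rel (φ : FormA) {x y : M.World} (hxy : M.R x y) :
    M.val (.box φ) x ≤ M.val φ y := by
  obtain ⟨c, hc⟩ := M.exists_abs_val_le φ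
  refine csInf_le ⟨-c, ?_⟩ ⟨y, hxy, rfl⟩
  rintro _ ⟨z, -, rfl⟩
  exact (abs_le.1 (hc z)).1

theorem val_box_eq_zero_of_forall_not_rel (φ : FormA) {x : M.World} (hx : ∀ y, ¬ M.R x y) :
    M.val (.box φ) x = 0 := by
  simp [val, hx]

end KAModel

/-- The seriality axiom `□p → ◇p`, i.e. `□p → ((□(p → 0̄)) → 0̄)`,
is K(A)-valid. -/
theorem stmt_19 (p : ℕ) :
    KAValid (.imp (.box (.var p)) (.imp (.box (.imp (.var p) .zero)) .zero)) := by
  intro M x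
  show 0 ≤ (0 - M.val (.box (.imp (.var p) .zero)) x) - M.val (.box (.var p)) x
  by_cases hx : ∃ y, M.R x y
  · obtain ⟨y, hxy⟩ := hx
    have hp : M.val (.box (.var p)) x ≤ M.V p y := KAModel.val_box_le_of_rel _ hxy
    have hnp : M.val (.box (.imp (.var p) .zero)) x ≤ 0 - M.V p y :=
      KAModel.val_box_le_of_rel _ hxy
    linarith
  · rw [not_exists] at hx
    simp [KAModel.val_box_eq_zero_of_forall_not_rel _ hx]
end
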